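/- arXiv:1711.07519 — 3 statements merged into one kernel-verified Lean document; each statement's English description precedes it below -/
import Mathlib

section
/- Let f : ℝ² → ℍ be measurable with e^{π|x|²} f ∈ L¹(ℝ²,ℍ) + L^∞(ℝ²,ℍ). Then the two-sided quaternion Fourier transform of f extends to an entire function on ℂ² satisfying |ℱ{f}(z)| ≤ K e^{π|z|²} for some constant K > 0, where |z|² = |Re z|² + |Im z|² is the squared Euclidean norm on ℂ². -/
open MeasureTheory Real

noncomputable section

def QI : Quaternion ℝ := ⟨0,1,0,0⟩
def QJ : Quaternion ℝ := ⟨0,0,1,0⟩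
def QK : Quaternion ℝ := ⟨0,0,0,1⟩

/-- `e^{uθ} = cos θ + u sin θ` for a quaternion imaginary unit `u`. -/
def qexp (u : Quaternion ℝ) (θ : ℝ) : Quaternion ℝ :=
  (Real.cos θ) • (1 : Quaternion ℝ) + (Real.sin θ) • u

/-- Two-sided quaternion Fourier transform. -/
def QFT (f : ℝ × ℝ → Quaternion ℝ) (ξ : ℝ × ℝ) : Quaternion ℝ :=
  ∫ x : ℝ × ℝ, qexp QI (-(2 * π * ξ.1 * x.1)) * f x * qexp QJ (-(2 * π * ξ.2 * x.2))

/-- `log⁺ x = max (log x) 0`. -/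
def posLog (x : ℝ) : ℝ := max (Real.log x) 0

/-!
In the complexified quaternions `e^{-iθ} = Σ_{σ = ±1} e^{σ i_ℂ θ} (1 + σ i_ℂ i) / 2`, and likewise
for `j`. This splits the integrand `e^{-iθ₁} f(x) e^{-jθ₂}` into four pieces
`e^{2π i_ℂ (σ₁ x₁ ξ₁ + σ₂ x₂ ξ₂)} P_σ(f(x))` in which `ξ` enters only through a scalar exponential,
so replacing `ξ` by `z ∈ ℂ²` gives entire integrands of modulus at most
`e^{2π (|z₁| |x₁| + |z₂| |x₂|)} |f(x)|`. As `|f(x)| ≤ e^{-π|x|²} (|u(x)| + |v(x)|)`, this leads to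
the factors `e^{2πb|t| - πt²} = e^{πb²} e^{-π(|t| - b)²}`, bounded by `e^{πb²}` and of integral at
most `2 e^{πb²}`: the `L¹` part contributes `O(‖u‖₁ e^{π|z|²})`, the `L^∞` part
`O(‖v‖_∞ e^{π|z|²})`, and the same bounds, locally uniform in `z`, justify differentiating under the
integral sign.
-/

open scoped Complex
open Complex (I)

def absGaussian (b t : ℝ) : ℝ := exp (2 * π * b * |t| - π * t ^ 2)

lemma absGaussian_nonneg (b t : ℝ) : 0 ≤ absGaussian b t := (exp_pos _).le

lemma continuous_absGaussian (b : ℝ) : Continuous (absGaussian b) := by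
  unfold absGaussian; fun_prop

lemma absGaussian_le (b t : ℝ) : absGaussian b t ≤ exp (π * b ^ 2) :=
  exp_le_exp.2 <| by nlinarith [pi_pos, sq_nonneg (|t| - b), sq_abs t]

lemma absGaussian_eq (b t : ℝ) :
    absGaussian b t = exp (π * b ^ 2) * exp (-π * (|t| - b) ^ 2) := by
  rw [absGaussian, ← exp_add, ← sq_abs t]; ring_nf

lemma integrable_absGaussian (b : ℝ) : Integrable (absGaussian b) := by
  refine ((integrable_exp_neg_mul_sq (by positivity : 0 < π / 2)).const_mul
    (exp (2 * π * b ^ 2))).mono' (continuous_absGaussian b).aestronglyMeasurable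
    (.of_forall fun t => ?_)
  rw [norm_of_nonneg (absGaussian_nonneg b t), absGaussian, ← exp_add]
  exact exp_le_exp.2 <| by nlinarith [pi_pos, sq_nonneg (|t| - 2 * b), sq_abs t]

lemma integral_absGaussian_le (b : ℝ) : ∫ t, absGaussian b t ≤ 2 * exp (π * b ^ 2) := by
  have hshift : Integrable fun t : ℝ => exp (-π * (t - b) ^ 2) :=
    (integrable_exp_neg_mul_sq pi_pos).comp_sub_right b
  have hmass : ∫ t : ℝ, exp (-π * (t - b) ^ 2) = 1 := by
    simpa [div_self pi_pos.ne'] using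
      (integral_sub_right_eq_self (fun t => exp (-π * t ^ 2)) b).trans (integral_gaussian π)
  have hhalf : ∫ t in Set.Ioi 0, exp (-π * (t - b) ^ 2) ≤ 1 :=
    hmass ▸ setIntegral_le_integral hshift (.of_forall fun _ => (exp_pos _).le)
  calc ∫ t, absGaussian b t
      = exp (π * b ^ 2) * (2 * ∫ t in Set.Ioi 0, exp (-π * (t - b) ^ 2)) := by
        simp_rw [absGaussian_eq, integral_const_mul]
        rw [integral_comp_abs (f := fun s => exp (-π * (s - b) ^ 2))]
    _ ≤ 2 * exp (π * b ^ 2) := by nlinarith [exp_pos (π * b ^ 2)]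

section GaussianDecomposition

variable {E : Type*} [NormedAddCommGroup E] [NormedSpace ℝ E] {f u v : ℝ × ℝ → E}

lemma eq_exp_neg_smul_of_exp_smul_eq (hf : ∀ x, exp (π * (x.1 ^ 2 + x.2 ^ 2)) • f x = u x + v x)
    (x : ℝ × ℝ) : f x = exp (-(π * (x.1 ^ 2 + x.2 ^ 2))) • (u x + v x) := by
  rw [← hf, smul_smul, ← exp_add, neg_add_cancel, exp_zero, one_smul]

lemma aestronglyMeasurable_of_exp_smul_eq (hu : Integrable u) (hv : MemLp v ⊤)
    (hf : ∀ x, exp (π * (x.1 ^ 2 + x.2 ^ 2)) • f x = u x + v x) : AEStronglyMeasurable f := by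
  rw [funext (eq_exp_neg_smul_of_exp_smul_eq hf)]
  exact (by fun_prop : Continuous fun x : ℝ × ℝ => exp (-(π * (x.1 ^ 2 + x.2 ^ 2))))
    |>.aestronglyMeasurable.smul (hu.1.add hv.1)

lemma ae_norm_le_of_exp_smul_eq (hv : MemLp v ⊤)
    (hf : ∀ x, exp (π * (x.1 ^ 2 + x.2 ^ 2)) • f x = u x + v x) : ∀ᵐ x,
    ‖f x‖ ≤ exp (-(π * (x.1 ^ 2 + x.2 ^ 2))) * (‖u x‖ + lpNorm v ⊤ volume) := by
  filter_upwards [ae_le_lpNorm_exponent_top hv] with x hx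
  rw [eq_exp_neg_smul_of_exp_smul_eq hf, norm_smul, norm_of_nonneg (exp_pos _).le]
  exact mul_le_mul_of_nonneg_left ((norm_add_le _ _).trans (by linarith)) (exp_pos _).le

end GaussianDecomposition

section GaussianDecay

variable {E : Type*} [NormedAddCommGroup E] {f : ℝ × ℝ → E} {g : ℝ × ℝ → ℝ} {M : ℝ}

lemma exp_mul_gaussian_eq_absGaussian_mul (b₁ b₂ : ℝ) (x : ℝ × ℝ) :
    exp (2 * π * b₁ * |x.1| + 2 * π * b₂ * |x.2|) * exp (-(π * (x.1 ^ 2 + x.2 ^ 2))) =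
      absGaussian b₁ x.1 * absGaussian b₂ x.2 := by
  simp only [absGaussian, ← exp_add]; ring_nf

lemma integrable_absGaussian_prod (b₁ b₂ : ℝ) :
    Integrable fun x : ℝ × ℝ => absGaussian b₁ x.1 * absGaussian b₂ x.2 := by
  rw [Measure.volume_eq_prod]
  exact (integrable_absGaussian b₁).mul_prod (integrable_absGaussian b₂)

lemma integrable_absGaussian_prod_mul (hg : Integrable g) (b₁ b₂ : ℝ) :
    Integrable fun x : ℝ × ℝ => absGaussian b₁ x.1 * absGaussian b₂ x.2 * g x := by
  refine hg.bdd_mul (c := exp (π * b₁ ^ 2) * exp (π * b₂ ^ 2))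
    (integrable_absGaussian_prod b₁ b₂).aestronglyMeasurable (.of_forall fun x => ?_)
  rw [norm_of_nonneg (mul_nonneg (absGaussian_nonneg _ _) (absGaussian_nonneg _ _))]
  exact mul_le_mul (absGaussian_le _ _) (absGaussian_le _ _) (absGaussian_nonneg _ _)
    (exp_pos _).le

variable (hfg : ∀ᵐ x, ‖f x‖ ≤ exp (-(π * (x.1 ^ 2 + x.2 ^ 2))) * (g x + M))
include hfg

lemma ae_exp_mul_norm_le (b₁ b₂ : ℝ) : ∀ᵐ x : ℝ × ℝ,
    exp (2 * π * b₁ * |x.1| + 2 * π * b₂ * |x.2|) * ‖f x‖ ≤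
      absGaussian b₁ x.1 * absGaussian b₂ x.2 * g x +
        absGaussian b₁ x.1 * absGaussian b₂ x.2 * M := by
  filter_upwards [hfg] with x hx
  rw [← mul_add, ← exp_mul_gaussian_eq_absGaussian_mul, mul_assoc (exp _)]
  exact mul_le_mul_of_nonneg_left hx (exp_pos _).le

lemma integrable_exp_mul_norm (hf : AEStronglyMeasurable f) (hg : Integrable g) (b₁ b₂ : ℝ) :
    Integrable fun x : ℝ × ℝ => exp (2 * π * b₁ * |x.1| + 2 * π * b₂ * |x.2|) * ‖f x‖ := by
  refine ((integrable_absGaussian_prod_mul hg b₁ b₂).add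
    ((integrable_absGaussian_prod b₁ b₂).mul_const M)).mono' (by fun_prop) ?_
  filter_upwards [ae_exp_mul_norm_le hfg b₁ b₂] with x hx
  rwa [norm_of_nonneg (by positivity)]

lemma integral_exp_mul_norm_le (hg : Integrable g) (hg0 : 0 ≤ g) (hM : 0 ≤ M) (b₁ b₂ : ℝ) :
    ∫ x : ℝ × ℝ, exp (2 * π * b₁ * |x.1| + 2 * π * b₂ * |x.2|) * ‖f x‖ ≤
      ((∫ x, g x) + 4 * M) * exp (π * (b₁ ^ 2 + b₂ ^ 2)) := by
  have hprod : ∫ x : ℝ × ℝ, absGaussian b₁ x.1 * absGaussian b₂ x.2 ≤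
      2 * exp (π * b₁ ^ 2) * (2 * exp (π * b₂ ^ 2)) := by
    rw [Measure.volume_eq_prod, integral_prod_mul]
    exact mul_le_mul (integral_absGaussian_le b₁) (integral_absGaussian_le b₂)
      (integral_nonneg (absGaussian_nonneg b₂)) (by positivity)
  have hweighted : ∫ x : ℝ × ℝ, absGaussian b₁ x.1 * absGaussian b₂ x.2 * g x ≤
      exp (π * b₁ ^ 2) * exp (π * b₂ ^ 2) * ∫ x, g x := by
    rw [← integral_const_mul]
    refine integral_mono_of_nonneg (.of_forall fun x => ?_) (hg.const_mul _)
      (.of_forall fun x => ?_)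
    · exact mul_nonneg (mul_nonneg (absGaussian_nonneg _ _) (absGaussian_nonneg _ _)) (hg0 x)
    · exact mul_le_mul_of_nonneg_right (mul_le_mul (absGaussian_le _ _) (absGaussian_le _ _)
        (absGaussian_nonneg _ _) (exp_pos _).le) (hg0 x)
  have hG := integrable_absGaussian_prod_mul hg b₁ b₂
  have hGM := (integrable_absGaussian_prod b₁ b₂).mul_const M
  calc ∫ x : ℝ × ℝ, exp (2 * π * b₁ * |x.1| + 2 * π * b₂ * |x.2|) * ‖f x‖
      ≤ ∫ x : ℝ × ℝ, (absGaussian b₁ x.1 * absGaussian b₂ x.2 * g x +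
          absGaussian b₁ x.1 * absGaussian b₂ x.2 * M) :=
        integral_mono_of_nonneg (.of_forall fun x => by positivity) (hG.add hGM)
          (ae_exp_mul_norm_le hfg b₁ b₂)
    _ = (∫ x : ℝ × ℝ, absGaussian b₁ x.1 * absGaussian b₂ x.2 * g x) +
          (∫ x : ℝ × ℝ, absGaussian b₁ x.1 * absGaussian b₂ x.2) * M := by
        rw [integral_add hG hGM, integral_mul_const]
    _ ≤ ((∫ x, g x) + 4 * M) * exp (π * (b₁ ^ 2 + b₂ ^ 2)) := by
        rw [mul_add π, exp_add]
        nlinarith [mul_le_mul_of_nonneg_right hprod hM]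

end GaussianDecay

section HolomorphicParametricIntegral

variable {α V E : Type*} [MeasurableSpace α] {μ : Measure α} [NormedAddCommGroup V]
  [NormedSpace ℂ V] [NormedAddCommGroup E] [NormedSpace ℂ E] {L : α → V →L[ℂ] ℂ} {v : α → E}

lemma norm_cexp_clm_le (ℓ : V →L[ℂ] ℂ) (z : V) : ‖cexp (ℓ z)‖ ≤ exp (‖ℓ‖ * ‖z‖) :=
  (Complex.norm_exp_le_exp_norm _).trans (exp_le_exp.2 (ℓ.le_opNorm z))

variable (hL : AEStronglyMeasurable L μ) (hv : AEStronglyMeasurable v μ)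
  (hint : ∀ R, 0 ≤ R → Integrable (fun x => exp (R * ‖L x‖) * ‖v x‖) μ)
include hL hv hint

lemma integrable_cexp_clm_smul (z : V) : Integrable (fun x => cexp (L x z) • v x) μ := by
  refine (hint ‖z‖ (norm_nonneg z)).mono' ?_ (.of_forall fun x => ?_)
  · exact (Complex.continuous_exp.comp_aestronglyMeasurable
      (hL.apply_continuousLinearMap z)).smul hv
  · rw [norm_smul, mul_comm ‖z‖]
    exact mul_le_mul_of_nonneg_right (norm_cexp_clm_le _ _) (norm_nonneg _)

lemma hasFDerivAt_integral_cexp_clm_smul (z₀ : V) :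
    HasFDerivAt (fun z => ∫ x, cexp (L x z) • v x ∂μ)
      (∫ x, (cexp (L x z₀) • L x).smulRight (v x) ∂μ) z₀ := by
  refine hasFDerivAt_integral_of_dominated_of_fderiv_le (Metric.ball_mem_nhds z₀ one_pos)
    (.of_forall fun z => (integrable_cexp_clm_smul hL hv hint z).1)
    (integrable_cexp_clm_smul hL hv hint z₀)
    ((by fun_prop : Continuous fun p : (V →L[ℂ] ℂ) × E =>
      (cexp (p.1 z₀) • p.1).smulRight p.2).comp_aestronglyMeasurable (hL.prodMk hv))
    (.of_forall fun x z hz => ?_) (hint (‖z₀‖ + 2) (by positivity))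
    (.of_forall fun x z _ => ((L x).hasFDerivAt.cexp).smul_const (v x))
  have hz : ‖z‖ ≤ ‖z₀‖ + 1 := by
    have := norm_le_norm_add_norm_sub' z z₀
    rw [Metric.mem_ball, dist_eq_norm] at hz
    linarith
  calc ‖(cexp (L x z) • L x).smulRight (v x)‖
      = ‖cexp (L x z)‖ * ‖L x‖ * ‖v x‖ := by
        rw [ContinuousLinearMap.norm_smulRight_apply, norm_smul]
    _ ≤ exp (‖L x‖ * (‖z₀‖ + 1)) * exp ‖L x‖ * ‖v x‖ := by
        gcongr
        · exact (norm_cexp_clm_le _ _).trans (exp_le_exp.2 (by gcongr))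
        · linarith [add_one_le_exp ‖L x‖]
    _ = exp ((‖z₀‖ + 2) * ‖L x‖) * ‖v x‖ := by
        rw [← exp_add]; ring_nf

lemma differentiable_integral_cexp_clm_smul :
    Differentiable ℂ fun z => ∫ x, cexp (L x z) • v x ∂μ :=
  fun z₀ => (hasFDerivAt_integral_cexp_clm_smul hL hv hint z₀).differentiableAt

end HolomorphicParametricIntegral

def quatCoords : Quaternion ℝ →L[ℝ] (Fin 4 → ℂ) :=
  LinearMap.toContinuousLinearMap
    ((LinearMap.pi fun i => Complex.ofRealCLM.toLinearMap ∘ₗ LinearMap.proj i) ∘ₗ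
      (QuaternionAlgebra.linearEquivTuple (-1 : ℝ) 0 (-1)).toLinearMap)

lemma quatCoords_apply (q : Quaternion ℝ) :
    quatCoords q = ![(q.re : ℂ), (q.imI : ℂ), (q.imJ : ℂ), (q.imK : ℂ)] := by
  funext i; fin_cases i <;> rfl

def boolSign : Bool → ℝ
  | true => 1
  | false => -1

def phaseCLM (t : ℝ × ℝ) : ℂ × ℂ →L[ℂ] ℂ :=
  (2 * π * t.1 * I) • ContinuousLinearMap.fst ℂ ℂ ℂ +
    (2 * π * t.2 * I) • ContinuousLinearMap.snd ℂ ℂ ℂ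

@[fun_prop]
lemma continuous_phaseCLM : Continuous phaseCLM := by
  unfold phaseCLM; fun_prop

lemma phaseCLM_apply (t : ℝ × ℝ) (z : ℂ × ℂ) :
    phaseCLM t z = 2 * π * t.1 * I * z.1 + 2 * π * t.2 * I * z.2 := rfl

/-- The coordinates of `e₁ q e₂` in the complexified quaternions, for the idempotents
`e₁ = (1 + σ₁ i_ℂ i) / 2` and `e₂ = (1 + σ₂ i_ℂ j) / 2`, where `σₖ = boolSign s.k`. -/
def idempotentPart (s : Bool × Bool) : Quaternion ℝ →L[ℝ] (Fin 4 → ℂ) :=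
  (4 : ℂ)⁻¹ • (quatCoords +
    (boolSign s.1 * I) • quatCoords ∘L ContinuousLinearMap.mul ℝ _ QI +
    (boolSign s.2 * I) • quatCoords ∘L (ContinuousLinearMap.mul ℝ _).flip QJ -
    ((boolSign s.1 * boolSign s.2 : ℝ) : ℂ) • quatCoords ∘L ContinuousLinearMap.mul ℝ _ QI ∘L
      (ContinuousLinearMap.mul ℝ _).flip QJ)

def qftKernel (f : ℝ × ℝ → Quaternion ℝ) (z : ℂ × ℂ) (x : ℝ × ℝ) : Fin 4 → ℂ :=
  ∑ s : Bool × Bool,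
    cexp (phaseCLM (boolSign s.1 * x.1, boolSign s.2 * x.2) z) • idempotentPart s (f x)

lemma cexp_phaseCLM_ofReal (t ξ : ℝ × ℝ) :
    cexp (phaseCLM t (ξ.1, ξ.2)) =
      (Real.cos (2 * π * ξ.1 * t.1) + Real.sin (2 * π * ξ.1 * t.1) * I) *
      (Real.cos (2 * π * ξ.2 * t.2) + Real.sin (2 * π * ξ.2 * t.2) * I) := by
  push_cast
  rw [← Complex.exp_mul_I, ← Complex.exp_mul_I, ← Complex.exp_add, phaseCLM_apply]
  ring_nf

lemma qftKernel_ofReal (f : ℝ × ℝ → Quaternion ℝ) (ξ x : ℝ × ℝ) :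
    qftKernel f (ξ.1, ξ.2) x =
      quatCoords (qexp QI (-(2 * π * ξ.1 * x.1)) * f x * qexp QJ (-(2 * π * ξ.2 * x.2))) := by
  simp only [qftKernel, Fintype.sum_prod_type, Fintype.sum_bool, cexp_phaseCLM_ofReal,
    idempotentPart, boolSign, qexp]
  simp only [smul_apply, add_apply, sub_apply, ContinuousLinearMap.comp_apply,
    ContinuousLinearMap.mul_apply', ContinuousLinearMap.flip_apply, add_mul, mul_add,
    smul_mul_assoc, mul_smul_comm, map_add, map_smul, map_neg, one_mul, mul_one, mul_assoc,
    Real.cos_neg, Real.sin_neg, neg_smul, mul_neg, neg_mul, ← Complex.coe_smul, Complex.ofReal_neg]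
  match_scalars <;> ring_nf <;> simp only [Complex.I_sq] <;> ring

lemma norm_qexp_le (u : Quaternion ℝ) (θ : ℝ) : ‖qexp u θ‖ ≤ 1 + ‖u‖ := by
  refine (norm_add_le _ _).trans (add_le_add ?_ ?_) <;>
    rw [norm_smul, norm_eq_abs]
  · simpa using abs_cos_le_one θ
  · exact mul_le_of_le_one_left (norm_nonneg u) (abs_sin_le_one θ)

lemma integrable_qftIntegrand {f : ℝ × ℝ → Quaternion ℝ} (hf : Integrable f) (ξ : ℝ × ℝ) :
    Integrable fun x : ℝ × ℝ =>
      qexp QI (-(2 * π * ξ.1 * x.1)) * f x * qexp QJ (-(2 * π * ξ.2 * x.2)) := by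
  have hcont (u : Quaternion ℝ) (c : ℝ) : Continuous fun t : ℝ => qexp u (-(c * t)) := by
    unfold qexp; fun_prop
  refine (hf.norm.const_mul ((1 + ‖QI‖) * (1 + ‖QJ‖))).mono'
    ((((hcont QI _).comp continuous_fst).aestronglyMeasurable.mul hf.1).mul
      ((hcont QJ _).comp continuous_snd).aestronglyMeasurable) (.of_forall fun x => ?_)
  calc ‖qexp QI (-(2 * π * ξ.1 * x.1)) * f x * qexp QJ (-(2 * π * ξ.2 * x.2))‖
      ≤ (1 + ‖QI‖) * ‖f x‖ * (1 + ‖QJ‖) :=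
        (norm_mul_le _ _).trans (mul_le_mul ((norm_mul_le _ _).trans
          (mul_le_mul_of_nonneg_right (norm_qexp_le _ _) (norm_nonneg _))) (norm_qexp_le _ _)
          (norm_nonneg _) (by positivity))
    _ = (1 + ‖QI‖) * (1 + ‖QJ‖) * ‖f x‖ := by ring

lemma integral_qftKernel_ofReal {f : ℝ × ℝ → Quaternion ℝ} (hf : Integrable f) (ξ : ℝ × ℝ) :
    ∫ x, qftKernel f (ξ.1, ξ.2) x = quatCoords (QFT f ξ) := by
  simp_rw [qftKernel_ofReal]
  exact quatCoords.integral_comp_comm (integrable_qftIntegrand hf ξ)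

lemma abs_boolSign_mul (b : Bool) (t : ℝ) : |boolSign b * t| = |t| := by
  cases b <;> simp [boolSign]

lemma norm_phaseCLM_le (t : ℝ × ℝ) : ‖phaseCLM t‖ ≤ 2 * π * |t.1| + 2 * π * |t.2| := by
  have hcoef (r : ℝ) : ‖(2 * π * r * I : ℂ)‖ = 2 * π * |r| := by
    simp [abs_of_pos pi_pos]
  calc ‖phaseCLM t‖
      ≤ ‖(2 * π * t.1 * I : ℂ) • ContinuousLinearMap.fst ℂ ℂ ℂ‖ +
          ‖(2 * π * t.2 * I : ℂ) • ContinuousLinearMap.snd ℂ ℂ ℂ‖ := norm_add_le _ _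
    _ ≤ ‖(2 * π * t.1 * I : ℂ)‖ + ‖(2 * π * t.2 * I : ℂ)‖ := by
        rw [norm_smul, norm_smul]
        exact add_le_add
          (mul_le_of_le_one_right (norm_nonneg _) (ContinuousLinearMap.norm_fst_le ..))
          (mul_le_of_le_one_right (norm_nonneg _) (ContinuousLinearMap.norm_snd_le ..))
    _ = 2 * π * |t.1| + 2 * π * |t.2| := by rw [hcoef, hcoef]

lemma re_phaseCLM_le (t : ℝ × ℝ) (z : ℂ × ℂ) :
    (phaseCLM t z).re ≤ 2 * π * ‖z.1‖ * |t.1| + 2 * π * ‖z.2‖ * |t.2| := by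
  have h (r : ℝ) (w : ℂ) : (2 * π * r * I * w).re ≤ 2 * π * ‖w‖ * |r| := by
    have hre : (2 * π * r * I * w).re = 2 * π * -(r * w.im) := by simp [Complex.mul_re]; ring
    have hbound : -(r * w.im) ≤ ‖w‖ * |r| := calc
      -(r * w.im) ≤ |r| * |w.im| := (neg_le_abs _).trans (abs_mul _ _).le
      _ ≤ ‖w‖ * |r| := by rw [mul_comm]; gcongr; exact Complex.abs_im_le_norm w
    rw [hre, mul_assoc (2 * π)]
    exact mul_le_mul_of_nonneg_left hbound (by positivity)
  rw [phaseCLM_apply, Complex.add_re]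
  exact add_le_add (h _ _) (h _ _)

lemma norm_qftKernel_le (f : ℝ × ℝ → Quaternion ℝ) (z : ℂ × ℂ) (x : ℝ × ℝ) :
    ‖qftKernel f z x‖ ≤ (∑ s, ‖idempotentPart s‖) *
      (exp (2 * π * ‖z.1‖ * |x.1| + 2 * π * ‖z.2‖ * |x.2|) * ‖f x‖) := by
  rw [Finset.sum_mul]
  refine (norm_sum_le _ _).trans (Finset.sum_le_sum fun s _ => ?_)
  rw [norm_smul, Complex.norm_exp, mul_left_comm]
  refine mul_le_mul (exp_le_exp.2 ?_) ((idempotentPart s).le_opNorm _) (norm_nonneg _)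
    (exp_pos _).le
  simpa only [abs_boolSign_mul] using re_phaseCLM_le (boolSign s.1 * x.1, boolSign s.2 * x.2) z

section KernelIntegral

variable {f : ℝ × ℝ → Quaternion ℝ} (hint : ∀ b₁ b₂,
  Integrable fun x : ℝ × ℝ => exp (2 * π * b₁ * |x.1| + 2 * π * b₂ * |x.2|) * ‖f x‖)
include hint

lemma integrable_exp_norm_phaseCLM_mul (hf : AEStronglyMeasurable f) (s : Bool × Bool) (R : ℝ)
    (hR : 0 ≤ R) :
    Integrable fun x : ℝ × ℝ =>
      exp (R * ‖phaseCLM (boolSign s.1 * x.1, boolSign s.2 * x.2)‖) * ‖idempotentPart s (f x)‖ := by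
  refine ((hint R R).const_mul ‖idempotentPart s‖).mono' (by fun_prop) (.of_forall fun x => ?_)
  have hphase := norm_phaseCLM_le (boolSign s.1 * x.1, boolSign s.2 * x.2)
  simp only [abs_boolSign_mul] at hphase
  rw [norm_of_nonneg (by positivity), mul_left_comm]
  refine mul_le_mul (exp_le_exp.2 ?_) ((idempotentPart s).le_opNorm _) (norm_nonneg _)
    (exp_pos _).le
  nlinarith

lemma differentiable_integral_qftKernel (hf : AEStronglyMeasurable f) :
    Differentiable ℂ fun z => ∫ x, qftKernel f z x := by
  have hL (s : Bool × Bool) : AEStronglyMeasurable fun x : ℝ × ℝ =>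
      phaseCLM (boolSign s.1 * x.1, boolSign s.2 * x.2) := by fun_prop
  have hv (s : Bool × Bool) : AEStronglyMeasurable fun x => idempotentPart s (f x) :=
    (idempotentPart s).continuous.comp_aestronglyMeasurable hf
  have hsplit : (fun z => ∫ x, qftKernel f z x) = fun z => ∑ s, ∫ x,
      cexp (phaseCLM (boolSign s.1 * x.1, boolSign s.2 * x.2) z) • idempotentPart s (f x) := by
    funext z
    exact integral_finsetSum _ fun s _ => integrable_cexp_clm_smul (hL s) (hv s)
      (integrable_exp_norm_phaseCLM_mul hint hf s) z
  rw [hsplit]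
  exact .fun_sum fun s _ => differentiable_integral_cexp_clm_smul (hL s) (hv s)
    (integrable_exp_norm_phaseCLM_mul hint hf s)

lemma norm_integral_qftKernel_le (z : ℂ × ℂ) :
    ‖∫ x, qftKernel f z x‖ ≤ (∑ s, ‖idempotentPart s‖) *
      ∫ x : ℝ × ℝ, exp (2 * π * ‖z.1‖ * |x.1| + 2 * π * ‖z.2‖ * |x.2|) * ‖f x‖ := by
  rw [← integral_const_mul]
  exact norm_integral_le_of_norm_le ((hint _ _).const_mul _)
    (.of_forall fun x => norm_qftKernel_le f z x)

end KernelIntegral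

lemma sqrt_sum_norm_sq_le {ι E : Type*} [Fintype ι] [SeminormedAddCommGroup E] (y : ι → E) :
    √(∑ i, ‖y i‖ ^ 2) ≤ √(Fintype.card ι) * ‖y‖ := by
  rw [← sqrt_sq (norm_nonneg y), ← sqrt_mul (Nat.cast_nonneg _)]
  refine sqrt_le_sqrt ((Finset.sum_le_sum fun i _ => ?_).trans_eq
    (by rw [Finset.sum_const, Finset.card_univ, nsmul_eq_mul]))
  exact pow_le_pow_left₀ (norm_nonneg _) (norm_le_pi_norm y i) 2

theorem qft_entire_extension_general (f : ℝ × ℝ → Quaternion ℝ)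
    (hdecomp : ∃ u v : ℝ × ℝ → Quaternion ℝ, Integrable u ∧ MemLp v ⊤ ∧
      ∀ x : ℝ × ℝ, Real.exp (π * (x.1 ^ 2 + x.2 ^ 2)) • f x = u x + v x) :
    ∃ K : ℝ, 0 < K ∧ ∃ F : ℂ × ℂ → (Fin 4 → ℂ), Differentiable ℂ F ∧
      (∀ ξ : ℝ × ℝ, F ((ξ.1 : ℂ), (ξ.2 : ℂ)) =
        ![(((QFT f ξ).re : ℝ) : ℂ), (((QFT f ξ).imI : ℝ) : ℂ),
          (((QFT f ξ).imJ : ℝ) : ℂ), (((QFT f ξ).imK : ℝ) : ℂ)]) ∧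
      ∀ z : ℂ × ℂ, Real.sqrt (∑ i : Fin 4, ‖F z i‖ ^ 2) ≤
        K * Real.exp (π * (‖z.1‖ ^ 2 + ‖z.2‖ ^ 2)) := by
  obtain ⟨u, v, hu, hv, hfuv⟩ := hdecomp
  have hf := aestronglyMeasurable_of_exp_smul_eq hu hv hfuv
  have hfg := ae_norm_le_of_exp_smul_eq hv hfuv
  have hint := integrable_exp_mul_norm hfg hf hu.norm
  have hfi : Integrable f := (integrable_norm_iff hf).1 (by simpa using hint 0 0)
  set A := (∫ x, ‖u x‖) + 4 * lpNorm v ⊤ volume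
  set C := ∑ s, ‖idempotentPart s‖
  have hA : 0 ≤ A :=
    add_nonneg (integral_nonneg fun _ => norm_nonneg _) (mul_nonneg four_pos.le lpNorm_nonneg)
  have hC : 0 ≤ C := by positivity
  refine ⟨2 * C * A + 1, by positivity, fun z => ∫ x, qftKernel f z x,
    differentiable_integral_qftKernel hint hf,
    fun ξ => (integral_qftKernel_ofReal hfi ξ).trans (quatCoords_apply _), fun z => ?_⟩
  calc √(∑ i, ‖(∫ x, qftKernel f z x) i‖ ^ 2)
      ≤ 2 * ‖∫ x, qftKernel f z x‖ := by
        simpa [show √4 = (2 : ℝ) by rw [show (4 : ℝ) = 2 ^ 2 by norm_num, sqrt_sq two_pos.le]]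
          using sqrt_sum_norm_sq_le (∫ x, qftKernel f z x)
    _ ≤ 2 * (C * (A * exp (π * (‖z.1‖ ^ 2 + ‖z.2‖ ^ 2)))) := by
        refine mul_le_mul_of_nonneg_left ((norm_integral_qftKernel_le hint z).trans ?_) two_pos.le
        exact mul_le_mul_of_nonneg_left
          (integral_exp_mul_norm_le hfg hu.norm (fun _ => norm_nonneg _) lpNorm_nonneg _ _) hC
    _ ≤ (2 * C * A + 1) * exp (π * (‖z.1‖ ^ 2 + ‖z.2‖ ^ 2)) := by
        nlinarith [exp_pos (π * (‖z.1‖ ^ 2 + ‖z.2‖ ^ 2))]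

theorem qft_entire_extension (f : ℝ × ℝ → Quaternion ℝ)
    (hmeas : AEStronglyMeasurable f volume)
    (hdecomp : ∃ u v : ℝ × ℝ → Quaternion ℝ, Integrable u ∧ MemLp v ⊤ ∧
      ∀ x : ℝ × ℝ, Real.exp (π * (x.1 ^ 2 + x.2 ^ 2)) • f x = u x + v x) :
    ∃ K : ℝ, 0 < K ∧ ∃ F : ℂ × ℂ → (Fin 4 → ℂ), Differentiable ℂ F ∧
      (∀ ξ : ℝ × ℝ, F ((ξ.1 : ℂ), (ξ.2 : ℂ)) =
        ![(((QFT f ξ).re : ℝ) : ℂ), (((QFT f ξ).imI : ℝ) : ℂ),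
          (((QFT f ξ).imJ : ℝ) : ℂ), (((QFT f ξ).imK : ℝ) : ℂ)]) ∧
      ∀ z : ℂ × ℂ, Real.sqrt (∑ i : Fin 4, ‖F z i‖ ^ 2) ≤
        K * Real.exp (π * (‖z.1‖ ^ 2 + ‖z.2‖ ^ 2)) :=
  qft_entire_extension_general f hdecomp
end
end

section
/- (Miyachi's theorem for the QFT, subcritical case) Let α, β > 0 with αβ < π². Then there exist infinitely many linearly independent measurable functions f : ℝ² → ℍ such that e^{α|x|²} f ∈ L¹(ℝ²,ℍ) + L^∞(ℝ²,ℍ) and ∫_{ℝ²} log⁺(|ℱ{f}(y)| e^{β|y|²} / ρ) dy < ∞ for some ρ > 0. In particular, for any γ with α/π < γ < π/β and any polynomial P, the function f(x) = P(x) e^{-πγ|x|²} satisfies both conditions. -/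
open MeasureTheory Real

noncomputable section

/-- The two Miyachi conditions for parameters `α β`. -/
def MiyachiCond (α β : ℝ) (f : ℝ × ℝ → Quaternion ℝ) : Prop :=
  AEStronglyMeasurable f volume ∧
  (∃ u v : ℝ × ℝ → Quaternion ℝ, Integrable u ∧ MemLp v ⊤ ∧
    ∀ x : ℝ × ℝ, Real.exp (α * (x.1 ^ 2 + x.2 ^ 2)) • f x = u x + v x) ∧
  ∃ ρ : ℝ, 0 < ρ ∧ Integrable (fun y : ℝ × ℝ =>
    _root_.posLog (‖QFT f y‖ * Real.exp (β * (y.1 ^ 2 + y.2 ^ 2)) / ρ))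

/-!
Write `f(x) = P(x) e^{-πγ|x|²}` as a finite sum of products `g(x₁) h(x₂)` of real functions of one
variable. For such a product the two-sided QFT factors as `ι_I(𝓕g(ξ₁)) · ι_J(𝓕h(ξ₂))`, where
`ι_u : ℂ → ℍ` is the isometric embedding sending `i` to the unit pure quaternion `u`, and
`𝓕(t^m e^{-πγt²})(ξ) = Q_m(ξ) e^{-πξ²/γ}` for a polynomial `Q_m` (differentiate the Fourier
transform, inducting on `m`). So `|ℱ{f}(ξ)| e^{β|ξ|²}` is dominated by a polynomial times
`e^{-(π/γ - β)|ξ|²}`, integrable when `βγ < π`, and `log⁺ t ≤ t`. On the other side `e^{α|x|²} f`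
is itself integrable when `α < πγ`. Such a `γ` exists because `αβ < π²`, and `P ↦ P e^{-πγ|x|²}`
is linear and injective, so the images of the monomials form an infinite independent family.
-/

open Complex (I)
open scoped Quaternion FourierTransform Polynomial
open Polynomial (C X)

namespace Quaternion

variable {u : ℍ[ℝ]}

lemma mul_self_eq_neg_one (hre : u.re = 0) (hu : normSq u = 1) : u * u = -1 := by
  rw [← sq, sq_eq_neg_normSq.2 hre, hu, coe_one]

def complexEmbedding (u : ℍ[ℝ]) (hre : u.re = 0) (hu : normSq u = 1) : ℂ →ₗᵢ[ℝ] ℍ[ℝ] where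
  toLinearMap := (Complex.lift ⟨u, mul_self_eq_neg_one hre hu⟩).toLinearMap
  norm_map' z := by
    rw [normSq_def', hre] at hu
    rw [← sq_eq_sq₀ (norm_nonneg _) (norm_nonneg _), sq, ← normSq_eq_norm_mul_self, normSq_def',
      Complex.sq_norm, Complex.normSq_apply]
    simp only [AlgHom.toLinearMap_apply, Complex.lift_apply, Complex.liftAux_apply, algebraMap_def,
      re_add, imI_add, imJ_add, imK_add, re_coe, imI_coe, imJ_coe, imK_coe, re_smul, imI_smul,
      imJ_smul, imK_smul, smul_eq_mul, hre]
    linear_combination z.im ^ 2 * hu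

lemma complexEmbedding_exp_mul_I (hre : u.re = 0) (hu : normSq u = 1) (θ : ℝ) :
    complexEmbedding u hre hu (Complex.exp (θ * I)) = qexp u θ := by
  simp [complexEmbedding, qexp, Complex.liftAux_apply, Complex.exp_ofReal_mul_I_re,
    Complex.exp_ofReal_mul_I_im, Algebra.algebraMap_eq_smul_one]

lemma norm_qexp (hre : u.re = 0) (hu : normSq u = 1) (θ : ℝ) : ‖qexp u θ‖ = 1 := by
  rw [← complexEmbedding_exp_mul_I hre hu, LinearIsometry.norm_map, Complex.norm_exp_ofReal_mul_I]

lemma complexEmbedding_fourier (hre : u.re = 0) (hu : normSq u = 1) (g : ℝ → ℝ) (ξ : ℝ) :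
    complexEmbedding u hre hu (𝓕 (fun t => (g t : ℂ)) ξ) =
      ∫ t, g t • qexp u (-(2 * π * ξ * t)) := by
  rw [Real.fourier_real_eq_integral_exp_smul, ← LinearIsometry.integral_comp_comm]
  congr 1; funext t
  rw [smul_eq_mul, mul_comm, ← Complex.real_smul, LinearIsometry.map_smul,
    complexEmbedding_exp_mul_I]
  ring_nf

end Quaternion

lemma MeasureTheory.Integrable.coe_quaternion {α : Type*} [MeasurableSpace α] {μ : Measure α}
    {F : α → ℝ} (hF : Integrable F μ) : Integrable (fun x => (F x : ℍ[ℝ])) μ :=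
  (hF.smul_const (1 : ℍ[ℝ])).congr
    (ae_of_all _ fun x => (Algebra.algebraMap_eq_smul_one (F x)).symm)

lemma continuous_qexp (u : ℍ[ℝ]) : Continuous (qexp u) := by
  unfold qexp; fun_prop

lemma QI_re : QI.re = 0 := rfl
lemma QJ_re : QJ.re = 0 := rfl
lemma normSq_QI : Quaternion.normSq QI = 1 := by rw [Quaternion.normSq_def']; norm_num [QI]
lemma normSq_QJ : Quaternion.normSq QJ = 1 := by rw [Quaternion.normSq_def']; norm_num [QJ]

lemma norm_qexp_QI (θ : ℝ) : ‖qexp QI θ‖ = 1 := Quaternion.norm_qexp QI_re normSq_QI θ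
lemma norm_qexp_QJ (θ : ℝ) : ‖qexp QJ θ‖ = 1 := Quaternion.norm_qexp QJ_re normSq_QJ θ

def embI : ℂ →ₗᵢ[ℝ] ℍ[ℝ] := Quaternion.complexEmbedding QI QI_re normSq_QI
def embJ : ℂ →ₗᵢ[ℝ] ℍ[ℝ] := Quaternion.complexEmbedding QJ QJ_re normSq_QJ

section QFT

variable {f : ℝ × ℝ → ℍ[ℝ]}

lemma integrable_QFT_integrand (hf : Integrable f) (ξ : ℝ × ℝ) :
    Integrable fun x : ℝ × ℝ =>
      qexp QI (-(2 * π * ξ.1 * x.1)) * f x * qexp QJ (-(2 * π * ξ.2 * x.2)) := by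
  refine hf.norm.mono' ?_ (ae_of_all _ fun x => ?_)
  · exact (((continuous_qexp QI).comp (by fun_prop)).aestronglyMeasurable.mul hf.1).mul
      ((continuous_qexp QJ).comp (by fun_prop)).aestronglyMeasurable
  · rw [norm_mul, norm_mul, norm_qexp_QI, norm_qexp_QJ, one_mul, mul_one]

lemma continuous_QFT (hf : Integrable f) : Continuous (QFT f) := by
  refine continuous_of_dominated (fun ξ => (integrable_QFT_integrand hf ξ).1)
    (fun ξ => ae_of_all _ fun x => ?_) hf.norm (ae_of_all _ fun x => ?_)
  · rw [norm_mul, norm_mul, norm_qexp_QI, norm_qexp_QJ, one_mul, mul_one]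
  · exact (((continuous_qexp QI).comp (by fun_prop)).mul continuous_const).mul
      ((continuous_qexp QJ).comp (by fun_prop))

lemma QFT_const_smul (c : ℝ) (f : ℝ × ℝ → ℍ[ℝ]) : QFT (c • f) = c • QFT f := by
  ext1 ξ
  simp only [QFT, Pi.smul_apply, mul_smul_comm, smul_mul_assoc, integral_smul]

lemma QFT_finsetSum {ι : Type*} (s : Finset ι) {F : ι → ℝ × ℝ → ℍ[ℝ]}
    (hF : ∀ i ∈ s, Integrable (F i)) : QFT (∑ i ∈ s, F i) = ∑ i ∈ s, QFT (F i) := by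
  ext1 ξ
  simp only [QFT, Finset.sum_apply, Finset.mul_sum, Finset.sum_mul]
  exact integral_finsetSum s fun i hi => integrable_QFT_integrand (hF i hi) ξ

lemma QFT_mul_separable {g h : ℝ → ℝ} (hg : Integrable g) (hh : Integrable h) (ξ : ℝ × ℝ) :
    QFT (fun x => ((g x.1 * h x.2 : ℝ) : ℍ[ℝ])) ξ =
      embI (𝓕 (fun t => (g t : ℂ)) ξ.1) * embJ (𝓕 (fun t => (h t : ℂ)) ξ.2) := by
  have hgI : Integrable fun t => g t • qexp QI (-(2 * π * ξ.1 * t)) :=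
    hg.smul_bdd 1 ((continuous_qexp QI).comp (by fun_prop)).aestronglyMeasurable
      (ae_of_all _ fun t => (norm_qexp_QI _).le)
  have hhJ : Integrable fun t => h t • qexp QJ (-(2 * π * ξ.2 * t)) :=
    hh.smul_bdd 1 ((continuous_qexp QJ).comp (by fun_prop)).aestronglyMeasurable
      (ae_of_all _ fun t => (norm_qexp_QJ _).le)
  have hprod := integral_prod_bilin (μ := volume) (ν := volume)
    (ContinuousLinearMap.mul ℝ ℍ[ℝ]) hgI hhJ
  simp only [ContinuousLinearMap.mul_apply', ← Measure.volume_eq_prod] at hprod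
  rw [embI, embJ, Quaternion.complexEmbedding_fourier, Quaternion.complexEmbedding_fourier,
    ← hprod, QFT]
  congr 1; funext x
  rw [Quaternion.mul_coe_eq_smul, smul_mul_assoc, smul_mul_smul_comm]

end QFT

def gaussianMonomial (c : ℝ) (m : ℕ) (t : ℝ) : ℝ := t ^ m * rexp (-c * t ^ 2)

section Gaussian

variable {c : ℝ}

lemma integrable_gaussianMonomial (hc : 0 < c) (m : ℕ) : Integrable (gaussianMonomial c m) := by
  show Integrable fun t => t ^ m * rexp (-c * t ^ 2)
  simpa [neg_mul, Real.rpow_natCast] using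
    integrable_rpow_mul_exp_neg_mul_sq hc (s := m) (by linarith [m.cast_nonneg (α := ℝ)])

lemma integrable_norm_eval_mul_exp_neg_sq (hc : 0 < c) (Q : ℂ[X]) :
    Integrable fun t : ℝ => ‖Q.eval (t : ℂ)‖ * rexp (-c * t ^ 2) := by
  have h : Integrable fun t : ℝ => Q.eval (t : ℂ) * (rexp (-c * t ^ 2) : ℂ) := by
    simp_rw [Polynomial.eval_eq_sum_range, Finset.sum_mul, mul_assoc]
    refine integrable_finsetSum _ fun k _ => Integrable.const_mul ?_ _
    simpa [gaussianMonomial] using (integrable_gaussianMonomial hc k).ofReal (𝕜 := ℂ)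
  refine h.norm.congr (ae_of_all _ fun t => ?_)
  dsimp only
  rw [norm_mul, Complex.norm_real, Real.norm_of_nonneg (Real.exp_pos _).le]

lemma hasDerivAt_eval_mul_exp_neg_sq (c : ℝ) (Q : ℂ[X]) (ξ : ℝ) :
    HasDerivAt (fun t : ℝ => Q.eval (t : ℂ) * (rexp (-c * t ^ 2) : ℂ))
      ((Q.derivative - C (2 * c : ℂ) * X * Q).eval (ξ : ℂ) * (rexp (-c * ξ ^ 2) : ℂ)) ξ := by
  have hQ := (Q.hasDerivAt (ξ : ℂ)).comp_ofReal
  have hexp := (((hasDerivAt_pow 2 ξ).const_mul (-c)).exp).ofReal_comp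
  refine (hQ.mul hexp).congr_deriv ?_
  simp only [Polynomial.eval_sub, Polynomial.eval_mul, Polynomial.eval_C, Polynomial.eval_X]
  push_cast
  ring

lemma hasDerivAt_fourier_gaussianMonomial (hc : 0 < c) (m : ℕ) (ξ : ℝ) :
    HasDerivAt (𝓕 fun t => (gaussianMonomial c m t : ℂ))
      (-2 * π * I * 𝓕 (fun t => (gaussianMonomial c (m + 1) t : ℂ)) ξ) ξ := by
  have hmul : ∀ t : ℝ, t • (gaussianMonomial c m t : ℂ) = gaussianMonomial c (m + 1) t := by
    intro t; simp only [gaussianMonomial, Complex.real_smul]; push_cast; ring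
  have h := Real.hasDerivAt_fourier (f := fun t => (gaussianMonomial c m t : ℂ))
    ((integrable_gaussianMonomial hc m).ofReal)
    (by convert (integrable_gaussianMonomial hc (m + 1)).ofReal (𝕜 := ℂ) using 2 with t
        exact hmul t) ξ
  refine h.congr_deriv ?_
  have hlin : 𝓕 (fun t => -2 * π * I * (gaussianMonomial c (m + 1) t : ℂ)) ξ =
      -2 * π * I * 𝓕 (fun t => (gaussianMonomial c (m + 1) t : ℂ)) ξ :=
    congrFun (VectorFourier.fourierIntegral_const_smul _ _ _ _ _) ξ
  rw [← hlin]
  refine congrArg (fun g : ℝ → ℂ => 𝓕 g ξ) (funext fun t => ?_)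
  rw [← hmul, Complex.real_smul, smul_eq_mul]
  ring

theorem fourier_gaussianMonomial {b : ℝ} (hb : 0 < b) (m : ℕ) :
    ∃ Q : ℂ[X], ∀ ξ : ℝ, 𝓕 (fun t => (gaussianMonomial (π * b) m t : ℂ)) ξ =
      Q.eval (ξ : ℂ) * (rexp (-(π / b) * ξ ^ 2) : ℂ) := by
  induction m with
  | zero =>
    refine ⟨C (1 / (b : ℂ) ^ (1 / 2 : ℂ)), fun ξ => ?_⟩
    have h := congrFun (fourier_gaussian_pi (b := (b : ℂ)) (by simpa using hb)) ξ
    simp only [gaussianMonomial, pow_zero, one_mul, Polynomial.eval_C]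
    push_cast at h ⊢
    convert h using 3 <;> ring_nf
  | succ m ih =>
    obtain ⟨Q, hQ⟩ := ih
    refine ⟨C (-2 * π * I)⁻¹ * (Q.derivative - C (2 * ((π / b : ℝ) : ℂ)) * X * Q), fun ξ => ?_⟩
    have hderiv := hasDerivAt_fourier_gaussianMonomial (c := π * b) (by positivity) m ξ
    rw [funext hQ] at hderiv
    have h := hderiv.unique (hasDerivAt_eval_mul_exp_neg_sq (π / b) Q ξ)
    have hne : (-2 * π * I : ℂ) ≠ 0 := by simp [Real.pi_ne_zero, Complex.I_ne_zero]
    rw [Polynomial.eval_mul, Polynomial.eval_C, mul_assoc, ← h, inv_mul_cancel_left₀ hne]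

end Gaussian

section PolynomialGaussian

lemma eval_mul_exp_neg_sq_eq_sum (P : MvPolynomial (Fin 2) ℝ) (c : ℝ) (x : ℝ × ℝ) :
    MvPolynomial.eval ![x.1, x.2] P * rexp (-c * (x.1 ^ 2 + x.2 ^ 2)) =
      ∑ d ∈ P.support, P.coeff d * (gaussianMonomial c (d 0) x.1 * gaussianMonomial c (d 1) x.2) := by
  rw [MvPolynomial.eval_eq', Finset.sum_mul]
  refine Finset.sum_congr rfl fun d _ => ?_
  simp only [Fin.prod_univ_two, Matrix.cons_val_zero, Matrix.cons_val_one, gaussianMonomial]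
  rw [show -c * (x.1 ^ 2 + x.2 ^ 2) = -c * x.1 ^ 2 + -c * x.2 ^ 2 by ring, Real.exp_add]
  ring

lemma integrable_mvPolynomial_eval_mul_exp_neg_sq {c : ℝ} (hc : 0 < c)
    (P : MvPolynomial (Fin 2) ℝ) :
    Integrable fun x : ℝ × ℝ =>
      MvPolynomial.eval ![x.1, x.2] P * rexp (-c * (x.1 ^ 2 + x.2 ^ 2)) := by
  simp_rw [eval_mul_exp_neg_sq_eq_sum]
  refine integrable_finsetSum _ fun d _ => Integrable.const_mul ?_ _
  rw [Measure.volume_eq_prod]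
  exact (integrable_gaussianMonomial hc _).mul_prod (integrable_gaussianMonomial hc _)

def gaussianMulPoly (γ : ℝ) : MvPolynomial (Fin 2) ℝ →ₗ[ℝ] (ℝ × ℝ → ℍ[ℝ]) where
  toFun P x :=
    ((MvPolynomial.eval ![x.1, x.2] P * Real.exp (-π * γ * (x.1 ^ 2 + x.2 ^ 2)) : ℝ) : ℍ[ℝ])
  map_add' P Q := by ext1 x; simp [add_mul]
  map_smul' a P := by
    ext1 x
    simp only [RingHom.id_apply, Pi.smul_apply, Quaternion.smul_coe, MvPolynomial.smul_eval,
      mul_assoc]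

variable (γ : ℝ) (P : MvPolynomial (Fin 2) ℝ)

lemma continuous_gaussianMulPoly : Continuous (gaussianMulPoly γ P) := by
  have hP : Continuous fun x : ℝ × ℝ => MvPolynomial.eval ![x.1, x.2] P :=
    (MvPolynomial.continuous_eval P).comp (by fun_prop)
  exact Quaternion.continuous_coe.comp (hP.mul (by fun_prop))

lemma gaussianMulPoly_injective : Function.Injective (gaussianMulPoly γ) := by
  refine (injective_iff_map_eq_zero _).2 fun P hP => MvPolynomial.funext fun x => ?_
  have hx : MvPolynomial.eval ![x 0, x 1] P * rexp (-π * γ * (x 0 ^ 2 + x 1 ^ 2)) = 0 := by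
    have h := congrFun hP (x 0, x 1)
    simp only [gaussianMulPoly, LinearMap.coe_mk, AddHom.coe_mk, Pi.zero_apply] at h
    exact Quaternion.coe_injective (h.trans Quaternion.coe_zero.symm)
  have hvec : ![x 0, x 1] = x := by ext i; fin_cases i <;> rfl
  simpa [hvec] using (mul_eq_zero.1 hx).resolve_right (Real.exp_ne_zero _)

lemma gaussianMulPoly_eq_sum :
    gaussianMulPoly γ P = ∑ d ∈ P.support, P.coeff d • fun x : ℝ × ℝ =>
      ((gaussianMonomial (π * γ) (d 0) x.1 * gaussianMonomial (π * γ) (d 1) x.2 : ℝ) : ℍ[ℝ]) := by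
  ext1 x
  simp only [gaussianMulPoly, LinearMap.coe_mk, AddHom.coe_mk, Finset.sum_apply, Pi.smul_apply,
    Quaternion.smul_coe, neg_mul π γ, eval_mul_exp_neg_sq_eq_sum]
  exact map_sum (algebraMap ℝ ℍ[ℝ]) _ _

lemma QFT_gaussianMulPoly (hγ : 0 < γ) (ξ : ℝ × ℝ) :
    QFT (gaussianMulPoly γ P) ξ = ∑ d ∈ P.support, P.coeff d •
      (embI (𝓕 (fun t => (gaussianMonomial (π * γ) (d 0) t : ℂ)) ξ.1) *
        embJ (𝓕 (fun t => (gaussianMonomial (π * γ) (d 1) t : ℂ)) ξ.2)) := by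
  have hint : ∀ m, Integrable (gaussianMonomial (π * γ) m) :=
    integrable_gaussianMonomial (by positivity)
  rw [gaussianMulPoly_eq_sum, QFT_finsetSum, Finset.sum_apply]
  · refine Finset.sum_congr rfl fun d _ => ?_
    rw [QFT_const_smul, Pi.smul_apply, QFT_mul_separable (hint _) (hint _)]
  · intro d _
    rw [Measure.volume_eq_prod]
    exact ((hint _).mul_prod (hint _)).coe_quaternion.smul _

end PolynomialGaussian

lemma integrable_posLog_of_le {α : Type*} [MeasurableSpace α] {μ : Measure α} {F G : α → ℝ}
    (hF : AEMeasurable F μ) (hF0 : ∀ x, 0 ≤ F x) (hG : Integrable G μ) (hFG : ∀ x, F x ≤ G x) :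
    Integrable (fun x => _root_.posLog (F x)) μ := by
  refine hG.mono'
    ((Real.measurable_log.comp_aemeasurable hF).max aemeasurable_const).aestronglyMeasurable
    (ae_of_all _ fun x => ?_)
  have hpos : 0 ≤ _root_.posLog (F x) := le_max_right _ _
  rw [Real.norm_of_nonneg hpos]
  exact (max_le (Real.log_le_self (hF0 x)) (hF0 x)).trans (hFG x)

section Miyachi

variable {α β γ : ℝ} (P : MvPolynomial (Fin 2) ℝ)

lemma integrable_exp_smul_gaussianMulPoly (hα : α < π * γ) :
    Integrable fun x : ℝ × ℝ => rexp (α * (x.1 ^ 2 + x.2 ^ 2)) • gaussianMulPoly γ P x := by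
  refine (integrable_mvPolynomial_eval_mul_exp_neg_sq (sub_pos.2 hα) P).coe_quaternion.congr
    (ae_of_all _ fun x => ?_)
  simp only [gaussianMulPoly, LinearMap.coe_mk, AddHom.coe_mk, Quaternion.smul_coe]
  congr 1
  rw [mul_left_comm, ← Real.exp_add]
  ring_nf

lemma integrable_gaussianMulPoly (hγ : 0 < γ) : Integrable (gaussianMulPoly γ P) := by
  simpa using integrable_exp_smul_gaussianMulPoly P (α := 0) (by positivity)

lemma integrable_posLog_QFT_gaussianMulPoly (hγ : 0 < γ) (hβ : β < π / γ) :
    Integrable fun y : ℝ × ℝ =>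
      _root_.posLog (‖QFT (gaussianMulPoly γ P) y‖ * rexp (β * (y.1 ^ 2 + y.2 ^ 2)) / 1) := by
  choose Q hQ using fourier_gaussianMonomial hγ
  set ε := π / γ - β with hε_def
  have hε : 0 < ε := sub_pos.2 hβ
  have hG : Integrable fun y : ℝ × ℝ => ∑ d ∈ P.support, |P.coeff d| *
      ((‖(Q (d 0)).eval (y.1 : ℂ)‖ * rexp (-ε * y.1 ^ 2)) *
        (‖(Q (d 1)).eval (y.2 : ℂ)‖ * rexp (-ε * y.2 ^ 2))) := by
    refine integrable_finsetSum _ fun d _ => Integrable.const_mul ?_ _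
    rw [Measure.volume_eq_prod]
    exact (integrable_norm_eval_mul_exp_neg_sq hε _).mul_prod
      (integrable_norm_eval_mul_exp_neg_sq hε _)
  refine integrable_posLog_of_le
    (((continuous_QFT (integrable_gaussianMulPoly P hγ)).norm.mul
      (by fun_prop)).div_const 1).aemeasurable (fun y => by positivity) hG fun y => ?_
  have hexp : rexp (-(π / γ) * y.1 ^ 2) * rexp (-(π / γ) * y.2 ^ 2) *
      rexp (β * (y.1 ^ 2 + y.2 ^ 2)) = rexp (-ε * y.1 ^ 2) * rexp (-ε * y.2 ^ 2) := by
    simp only [← Real.exp_add, hε_def]; ring_nf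
  rw [div_one, QFT_gaussianMulPoly γ P hγ]
  refine (mul_le_mul_of_nonneg_right (norm_sum_le _ _) (Real.exp_pos _).le).trans_eq ?_
  rw [Finset.sum_mul]
  refine Finset.sum_congr rfl fun d _ => ?_
  rw [norm_smul, norm_mul, LinearIsometry.norm_map, LinearIsometry.norm_map, hQ, hQ, norm_mul,
    norm_mul, Complex.norm_real, Complex.norm_real, Real.norm_of_nonneg (Real.exp_pos _).le,
    Real.norm_of_nonneg (Real.exp_pos _).le, Real.norm_eq_abs]
  linear_combination (|P.coeff d| * ‖(Q (d 0)).eval (y.1 : ℂ)‖ * ‖(Q (d 1)).eval (y.2 : ℂ)‖) * hexp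

theorem miyachiCond_gaussianMulPoly (hγ : 0 < γ) (hα : α < π * γ) (hβ : β < π / γ) :
    MiyachiCond α β (gaussianMulPoly γ P) :=
  ⟨(continuous_gaussianMulPoly γ P).aestronglyMeasurable,
    ⟨_, 0, integrable_exp_smul_gaussianMulPoly P hα, MemLp.zero, fun _ => (add_zero _).symm⟩,
    ⟨1, one_pos, integrable_posLog_QFT_gaussianMulPoly P hγ hβ⟩⟩

end Miyachi

theorem miyachi_subcritical (α β : ℝ) (hα : 0 < α) (hβ : 0 < β) (hαβ : α * β < π ^ 2) :
    (∃ S : Set (ℝ × ℝ → Quaternion ℝ), S.Infinite ∧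
      LinearIndependent ℝ (fun g : S => (g : ℝ × ℝ → Quaternion ℝ)) ∧
      ∀ f ∈ S, MiyachiCond α β f) ∧
    (∀ γ : ℝ, α / π < γ → γ < π / β → ∀ P : MvPolynomial (Fin 2) ℝ,
      MiyachiCond α β (fun x =>
        (((MvPolynomial.eval ![x.1, x.2] P) * Real.exp (-π * γ * (x.1 ^ 2 + x.2 ^ 2)) : ℝ) :
          Quaternion ℝ))) := by
  -- `gaussianMulPoly γ P` unfolds to the function in the second conjunct.
  have hcond (γ : ℝ) (hαγ : α / π < γ) (hγβ : γ < π / β) (P : MvPolynomial (Fin 2) ℝ) :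
      MiyachiCond α β (gaussianMulPoly γ P) := by
    have hγ : 0 < γ := (div_pos hα pi_pos).trans hαγ
    refine miyachiCond_gaussianMulPoly P hγ ((div_lt_iff₀' pi_pos).1 hαγ) ?_
    rw [lt_div_iff₀ hγ, mul_comm]
    exact (lt_div_iff₀ hβ).1 hγβ
  refine ⟨?_, hcond⟩
  obtain ⟨γ, hαγ, hγβ⟩ : ∃ γ, α / π < γ ∧ γ < π / β :=
    exists_between (by rw [div_lt_div_iff₀ pi_pos hβ]; nlinarith)
  have hli := (MvPolynomial.basisMonomials (Fin 2) ℝ).linearIndependent.map'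
    (gaussianMulPoly γ) (LinearMap.ker_eq_bot.2 (gaussianMulPoly_injective γ))
  refine ⟨_, Set.infinite_range_of_injective hli.injective, hli.linearIndepOn_id, ?_⟩
  rintro _ ⟨d, rfl⟩
  exact hcond γ hαγ hγβ _
end
end

section
/- The quaternion Gaussian f(x) = q e^{-α|x|²} with αβ = π² satisfies both Miyachi conditions: e^{α|x|²} f ∈ L^∞(ℝ²,ℍ), and ∫_{ℝ²} log⁺(|ℱ{f}(y)| e^{β|y|²} / ρ) dy < ∞ whenever ρ > |q| π/α. -/
open MeasureTheory Real

noncomputable section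

/-!
Integrating out the two variables separately, the transform of the Gaussian is a product of two
one-dimensional Fourier integrals of a real Gaussian against `qexp u (-c t)`. Such an integral is the
image of the complex Gaussian Fourier integral under `ℂ → ℍ`, `x + y i ↦ x + y u`, and since that
complex integral is real it equals `√(π/α) e^{-c²/(4α)}`, for any `u`. Hence
`QFT f ξ = (π/α) e^{-β|ξ|²} q`, so `‖QFT f y‖ e^{β|y|²} / ρ` is the constant `‖q‖ π / (α ρ) < 1`
and its `log⁺` vanishes. The first condition holds since `e^{α|x|²} f x = q`.
-/

section

open Complex

lemma integral_cexp_mul_gaussian (a c : ℝ) (ha : 0 < a) :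
    ∫ t : ℝ, cexp (I * -c * t) * cexp (-a * t ^ 2) =
      ((√(π / a) * Real.exp (-c ^ 2 / (4 * a)) : ℝ) : ℂ) := by
  rw [fourierIntegral_gaussian (by simpa using ha), neg_sq, ofReal_mul, ofReal_exp,
    Real.sqrt_eq_rpow, ofReal_cpow (by positivity)]
  push_cast
  rfl

lemma integrable_cexp_mul_gaussian (a c : ℝ) (ha : 0 < a) :
    Integrable fun t : ℝ => cexp (I * -c * t) * cexp (-a * t ^ 2) := by
  refine (integrable_cexp_quadratic (b := a) (by simpa using ha) (I * -c) 0).congr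
    (ae_of_all _ fun t => ?_)
  dsimp only
  rw [← Complex.exp_add]
  ring_nf

def complexToQuaternionCLM (u : Quaternion ℝ) : ℂ →L[ℝ] Quaternion ℝ :=
  reCLM.smulRight 1 + imCLM.smulRight u

lemma complexToQuaternionCLM_apply (u : Quaternion ℝ) (z : ℂ) :
    complexToQuaternionCLM u z = z.re • 1 + z.im • u := rfl

lemma exp_neg_mul_sq_smul_qexp (u : Quaternion ℝ) (a c t : ℝ) :
    Real.exp (-a * t ^ 2) • qexp u (-(c * t)) =
      complexToQuaternionCLM u (cexp (I * -c * t) * cexp (-a * t ^ 2)) := by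
  have h : cexp (I * -c * t) * cexp (-a * t ^ 2) =
      Real.exp (-a * t ^ 2) * cexp ((-(c * t) : ℝ) * I) := by
    push_cast
    ring_nf
  rw [h, complexToQuaternionCLM_apply, re_ofReal_mul, im_ofReal_mul, exp_ofReal_mul_I_re,
    exp_ofReal_mul_I_im, qexp, smul_add, smul_smul, smul_smul]

end

lemma integrable_exp_neg_mul_sq_smul_qexp (u : Quaternion ℝ) (a c : ℝ) (ha : 0 < a) :
    Integrable fun t : ℝ => Real.exp (-a * t ^ 2) • qexp u (-(c * t)) := by
  simp_rw [exp_neg_mul_sq_smul_qexp]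
  exact (complexToQuaternionCLM u).integrable_comp (integrable_cexp_mul_gaussian a c ha)

lemma integral_exp_neg_mul_sq_smul_qexp (u : Quaternion ℝ) (a c : ℝ) (ha : 0 < a) :
    ∫ t : ℝ, Real.exp (-a * t ^ 2) • qexp u (-(c * t)) =
      (√(π / a) * Real.exp (-c ^ 2 / (4 * a))) • 1 := by
  simp_rw [exp_neg_mul_sq_smul_qexp]
  rw [ContinuousLinearMap.integral_comp_comm _ (integrable_cexp_mul_gaussian a c ha),
    integral_cexp_mul_gaussian a c ha, complexToQuaternionCLM_apply, Complex.ofReal_re,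
    Complex.ofReal_im, zero_smul, add_zero]

lemma QFT_eq_mul_of_separable {f : ℝ × ℝ → Quaternion ℝ} {g₁ g₂ : ℝ → ℝ} {q : Quaternion ℝ}
    (hf : ∀ x, f x = (g₁ x.1 * g₂ x.2) • q) (ξ : ℝ × ℝ)
    (h₁ : Integrable fun t => g₁ t • qexp QI (-(2 * π * ξ.1 * t)))
    (h₂ : Integrable fun t => g₂ t • qexp QJ (-(2 * π * ξ.2 * t))) :
    QFT f ξ = (∫ t, g₁ t • qexp QI (-(2 * π * ξ.1 * t))) * q *
      ∫ t, g₂ t • qexp QJ (-(2 * π * ξ.2 * t)) := by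
  let B : Quaternion ℝ →L[ℝ] Quaternion ℝ →L[ℝ] Quaternion ℝ :=
    ContinuousLinearMap.mul ℝ _ ∘L (ContinuousLinearMap.mul ℝ _).flip q
  have hB : ∀ a b, B a b = a * q * b := fun _ _ => rfl
  have h := integral_prod_bilin B h₁ h₂
  simp only [hB, ← Measure.volume_eq_prod] at h
  rw [QFT, ← h]
  refine integral_congr_ae (ae_of_all _ fun x => ?_)
  simp only [hf, smul_mul_assoc, mul_smul_comm, smul_smul, mul_assoc]
  rw [mul_comm (g₁ x.1)]

lemma QFT_gaussian {α β : ℝ} (hα : 0 < α) (hαβ : α * β = π ^ 2) {q : Quaternion ℝ}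
    {f : ℝ × ℝ → Quaternion ℝ} (hf : ∀ x : ℝ × ℝ, f x = Real.exp (-α * (x.1 ^ 2 + x.2 ^ 2)) • q)
    (ξ : ℝ × ℝ) :
    QFT f ξ = (π / α * Real.exp (-β * (ξ.1 ^ 2 + ξ.2 ^ 2))) • q := by
  have hsep : ∀ x : ℝ × ℝ, f x = (Real.exp (-α * x.1 ^ 2) * Real.exp (-α * x.2 ^ 2)) • q := by
    intro x
    rw [hf, ← Real.exp_add, mul_add]
  have hexponent : ∀ d : ℝ, -(2 * π * d) ^ 2 / (4 * α) = -β * d ^ 2 := by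
    intro d
    field_simp
    linear_combination (4 * d ^ 2) * hαβ
  rw [QFT_eq_mul_of_separable hsep ξ (integrable_exp_neg_mul_sq_smul_qexp _ _ _ hα)
    (integrable_exp_neg_mul_sq_smul_qexp _ _ _ hα), integral_exp_neg_mul_sq_smul_qexp _ _ _ hα,
    integral_exp_neg_mul_sq_smul_qexp _ _ _ hα, hexponent, hexponent]
  simp only [smul_mul_assoc, mul_smul_comm, one_mul, mul_one, smul_smul]
  congr 1
  rw [mul_add, Real.exp_add]
  linear_combination Real.exp (-β * ξ.1 ^ 2) * Real.exp (-β * ξ.2 ^ 2) *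
    Real.mul_self_sqrt (div_pos pi_pos hα).le

lemma posLog_eq_zero_of_le_one {x : ℝ} (h₀ : 0 ≤ x) (h₁ : x ≤ 1) : _root_.posLog x = 0 :=
  max_eq_right (Real.log_nonpos h₀ h₁)

theorem gaussian_satisfies_miyachi_general (q : Quaternion ℝ) (α β : ℝ) (hα : 0 < α)
    (hαβ : α * β = π ^ 2) (f : ℝ × ℝ → Quaternion ℝ)
    (hf : ∀ x : ℝ × ℝ, f x = Real.exp (-α * (x.1 ^ 2 + x.2 ^ 2)) • q) :
    MemLp (fun x : ℝ × ℝ => Real.exp (α * (x.1 ^ 2 + x.2 ^ 2)) • f x) ⊤ ∧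
    ∀ ρ : ℝ, ‖q‖ * π / α < ρ → Integrable (fun y : ℝ × ℝ =>
      _root_.posLog (‖QFT f y‖ * Real.exp (β * (y.1 ^ 2 + y.2 ^ 2)) / ρ)) := by
  refine ⟨?_, fun ρ hρ => ?_⟩
  · have hconst : (fun x : ℝ × ℝ => Real.exp (α * (x.1 ^ 2 + x.2 ^ 2)) • f x) = fun _ => q := by
      funext x
      rw [hf, smul_smul, ← Real.exp_add, neg_mul, add_neg_cancel, Real.exp_zero, one_smul]
    rw [hconst]
    exact memLp_top_const q
  · have hconst : ∀ y : ℝ × ℝ, ‖QFT f y‖ * Real.exp (β * (y.1 ^ 2 + y.2 ^ 2)) = ‖q‖ * π / α := by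
      intro y
      have hexp : Real.exp (-β * (y.1 ^ 2 + y.2 ^ 2)) * Real.exp (β * (y.1 ^ 2 + y.2 ^ 2)) = 1 := by
        rw [← Real.exp_add, neg_mul, neg_add_cancel, Real.exp_zero]
      rw [QFT_gaussian hα hαβ hf, norm_smul, Real.norm_of_nonneg (by positivity)]
      linear_combination ‖q‖ * π / α * hexp
    have hρ₀ : 0 < ρ := lt_of_le_of_lt (by positivity) hρ
    simp_rw [hconst, posLog_eq_zero_of_le_one (div_nonneg (by positivity) hρ₀.le)
      ((div_le_one hρ₀).2 hρ.le)]
    exact integrable_zero _ _ _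

theorem gaussian_satisfies_miyachi (q : Quaternion ℝ) (α β : ℝ) (hα : 0 < α) (hβ : 0 < β)
    (hαβ : α * β = π ^ 2) (f : ℝ × ℝ → Quaternion ℝ)
    (hf : ∀ x : ℝ × ℝ, f x = Real.exp (-α * (x.1 ^ 2 + x.2 ^ 2)) • q) :
    MemLp (fun x : ℝ × ℝ => Real.exp (α * (x.1 ^ 2 + x.2 ^ 2)) • f x) ⊤ ∧
    ∀ ρ : ℝ, ‖q‖ * π / α < ρ → Integrable (fun y : ℝ × ℝ =>
      _root_.posLog (‖QFT f y‖ * Real.exp (β * (y.1 ^ 2 + y.2 ^ 2)) / ρ)) :=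
  gaussian_satisfies_miyachi_general q α β hα hαβ f hf
end
end
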